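/- arXiv:1806.08895 — 2 statements merged into one kernel-verified Lean document; each statement's English description precedes it below -/
import Mathlib

section
/- Let p ≥ 3 be a natural number, let G be a simple graph on a finite vertex type V with edge set E, and let P : V → Fin p be a hash function. Let m_in be the number of edges (u,v) ∈ E with P(u) = P(v) (inner edges) and m_out the number of edges with P(u) ≠ P(v) (outer edges). Then the total number of pairs (S, e), where S is a 3-element subset of Fin p and e = (u,v) ∈ E is a main edge of the subgraph indexed by S (i.e. both P(u) ∈ S and P(v) ∈ S), equals m_in · (p-1)(p-2)/2 + m_out · (p-2). In particular this total is at most m · (p-1)(p-2)/2 where m = m_in + m_out, so the total number of key-value pairs emitted across all reduce instances is O(mp²) in general and, when every edge is an outer edge, exactly m(p-2) = O(mp). (This is the exact counting identity behind Lemma 5, part 2.) -/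
/-!
Double counting over pairs (triple, edge): an edge whose hashed endpoints span a set `T`
(one colour for an inner edge, two for an outer one) is a main edge of exactly the triples
containing `T`, of which there are `C(p - #T, 3 - #T)`, i.e. `C(p-1, 2)` resp. `p - 2`.
-/

open Finset

theorem Finset.mem_sym2_iff_toFinset_subset {α : Type*} [DecidableEq α] {s : Finset α}
    {z : Sym2 α} : z ∈ s.sym2 ↔ z.toFinset ⊆ s := by
  simp only [mem_sym2_iff, subset_iff, Sym2.mem_toFinset]

theorem card_filter_card_eq_and_mem_sym2 {α : Type*} [Fintype α] [DecidableEq α] {k : ℕ}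
    (hk : 2 ≤ k) (z : Sym2 α) :
    #{S : Finset α | #S = k ∧ z ∈ S.sym2}
      = (Fintype.card α - #z.toFinset).choose (k - #z.toFinset) := by
  have hz : #z.toFinset ≤ k := by rw [Sym2.card_toFinset]; split_ifs <;> omega
  rw [← card_univ, ← card_filter_powersetCard_subset _ univ k (subset_univ _) hz]
  congr 1
  ext S
  simp only [mem_filter, mem_powersetCard_univ, mem_univ, true_and, mem_sym2_iff_toFinset_subset]

theorem card_filter_card_eq_three_and_mem_sym2 {p : ℕ} (z : Sym2 (Fin p)) :
    #{S : Finset (Fin p) | #S = 3 ∧ z ∈ S.sym2}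
      = if z.IsDiag then (p - 1) * (p - 2) / 2 else p - 2 := by
  rw [card_filter_card_eq_and_mem_sym2 (k := 3) (by norm_num), Sym2.card_toFinset,
    Fintype.card_fin]
  split_ifs
  · rw [Nat.choose_two_right, show p - 1 - 1 = p - 2 by omega]
  · exact Nat.choose_one_right _

theorem sum_card_filter_mem_sym2_eq {β : Type*} {p : ℕ} (E : Finset β)
    (f : β → Sym2 (Fin p)) :
    ∑ S ∈ univ.filter (fun S : Finset (Fin p) => #S = 3), #{e ∈ E | f e ∈ S.sym2}
      = #{e ∈ E | (f e).IsDiag} * ((p - 1) * (p - 2) / 2)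
        + #{e ∈ E | ¬ (f e).IsDiag} * (p - 2) := by
  have hswap := sum_card_bipartiteAbove_eq_sum_card_bipartiteBelow
    (s := univ.filter (fun S : Finset (Fin p) => #S = 3)) (t := E) (r := fun S e => f e ∈ S.sym2)
  simp only [bipartiteAbove, bipartiteBelow, filter_filter] at hswap
  simp only [hswap, card_filter_card_eq_three_and_mem_sym2]
  rw [sum_ite, sum_const, sum_const, smul_eq_mul, smul_eq_mul]

theorem stmt_10_general {p : ℕ} {V : Type*} [Fintype V]
    (G : SimpleGraph V) [DecidableRel G.Adj] (P : V → Fin p) :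
    (∑ S ∈ Finset.univ.filter (fun S : Finset (Fin p) => S.card = 3),
        (G.edgeFinset.filter (fun e => e.map P ∈ S.sym2)).card)
      = (G.edgeFinset.filter (fun e => (e.map P).IsDiag)).card
          * ((p - 1) * (p - 2) / 2)
        + (G.edgeFinset.filter (fun e => ¬ (e.map P).IsDiag)).card * (p - 2)
    ∧ (∑ S ∈ Finset.univ.filter (fun S : Finset (Fin p) => S.card = 3),
        (G.edgeFinset.filter (fun e => e.map P ∈ S.sym2)).card)
      ≤ G.edgeFinset.card * ((p - 1) * (p - 2) / 2)
    ∧ ((∀ e ∈ G.edgeFinset, ¬ (e.map P).IsDiag) →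
        (∑ S ∈ Finset.univ.filter (fun S : Finset (Fin p) => S.card = 3),
          (G.edgeFinset.filter (fun e => e.map P ∈ S.sym2)).card)
        = G.edgeFinset.card * (p - 2)) := by
  have hcount := sum_card_filter_mem_sym2_eq G.edgeFinset (Sym2.map P)
  have hle : p - 2 ≤ (p - 1) * (p - 2) / 2 := by
    rcases Nat.lt_or_ge p 3 with hp | hp
    · simp [show p - 2 = 0 by omega]
    · rw [Nat.le_div_iff_mul_le two_pos, mul_comm (p - 2)]
      exact Nat.mul_le_mul_right _ (by omega)
  refine ⟨hcount, ?_, fun hout => ?_⟩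
  · calc _ ≤ #{e ∈ G.edgeFinset | (e.map P).IsDiag} * ((p - 1) * (p - 2) / 2)
          + #{e ∈ G.edgeFinset | ¬ (e.map P).IsDiag} * ((p - 1) * (p - 2) / 2) := by
          rw [hcount]; gcongr
      _ = #G.edgeFinset * ((p - 1) * (p - 2) / 2) := by
          rw [← add_mul, card_filter_add_card_filter_not]
  · rw [hcount, filter_false_of_mem hout, filter_true_of_mem hout, card_empty, zero_mul, zero_add]

/-- Exact counting identity behind Lemma 5, part 2: the total number of pairs
`(S, e)` where `S` is a 3-element subset of `Fin p` and `e` is a main edge of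
the subgraph indexed by `S` equals
`m_in · (p-1)(p-2)/2 + m_out · (p-2)`; in particular it is at most
`m · (p-1)(p-2)/2`, and it equals `m · (p-2)` when every edge is an outer
edge. -/
theorem stmt_10 {p : ℕ} (hp : 3 ≤ p) {V : Type*} [Fintype V] [DecidableEq V]
    (G : SimpleGraph V) [DecidableRel G.Adj] (P : V → Fin p) :
    (∑ S ∈ Finset.univ.filter (fun S : Finset (Fin p) => S.card = 3),
        (G.edgeFinset.filter (fun e => e.map P ∈ S.sym2)).card)
      = (G.edgeFinset.filter (fun e => (e.map P).IsDiag)).card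
          * ((p - 1) * (p - 2) / 2)
        + (G.edgeFinset.filter (fun e => ¬ (e.map P).IsDiag)).card * (p - 2)
    ∧ (∑ S ∈ Finset.univ.filter (fun S : Finset (Fin p) => S.card = 3),
        (G.edgeFinset.filter (fun e => e.map P ∈ S.sym2)).card)
      ≤ G.edgeFinset.card * ((p - 1) * (p - 2) / 2)
    ∧ ((∀ e ∈ G.edgeFinset, ¬ (e.map P).IsDiag) →
        (∑ S ∈ Finset.univ.filter (fun S : Finset (Fin p) => S.card = 3),
          (G.edgeFinset.filter (fun e => e.map P ∈ S.sym2)).card)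
        = G.edgeFinset.card * (p - 2)) :=
  stmt_10_general G P
end

section
/- Let G be a simple graph on a finite vertex type V with n = |V| ≥ 2 vertices and m edges. Then the sum over all vertices u of the square of the degree of u satisfies ∑_{u ∈ V} deg(u)² ≤ m · (2m/(n-1) + n - 2), where the inequality is between real numbers. (This is the upper bound on the sum of squared degrees, used in the complexity analysis of the DecGP algorithm to bound the work of computing common and exclusive interactions in each subgraph.) -/
/-!
Write the bound multiplied out as `(n - 1) ∑ deg² ≤ 2m² + m(n - 1)(n - 2)`. Deleting a vertex `z`
leaves `n - 1` vertices and `m - deg z` edges, and `∑_z ∑_{v ≠ z} deg_{G - z}(v)² = (n - 3) ∑ deg² + 2m`.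
Hence adding up the bounds for the `n` graphs `G - z` gives exactly `n - 4` times the bound for `G`,
which proves it by induction once `n ≥ 5`. The slack `2m² + m(n - 1)(n - 2) - (n - 1) ∑ deg²` is the
same for `G` and its complement, and for `n ≤ 4` one of the two has at most `n - 1` edges; there the
bound already follows from `deg u + deg v ≤ m + 1` along every edge `uv`.
-/

open Finset

theorem Fintype.sum_compl_singleton_add {V M : Type*} [Fintype V] [DecidableEq V]
    [AddCommMonoid M] (z : V) (f : V → M) :
    ∑ v : ↥({z}ᶜ : Set V), f v + f z = ∑ v, f v := by
  rw [← sum_subtype (univ.erase z) (by simp)]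
  exact sum_erase_add _ _ (mem_univ z)

theorem Fintype.card_compl_singleton_add_one {V : Type*} [Fintype V] [DecidableEq V] (z : V) :
    Fintype.card ↥({z}ᶜ : Set V) + 1 = Fintype.card V := by
  rw [Fintype.card_compl_set, Set.card_singleton]
  have : 0 < Fintype.card V := Fintype.card_pos_iff.2 ⟨z⟩
  omega

namespace SimpleGraph

variable {V : Type*} [Fintype V] (G : SimpleGraph V) [DecidableRel G.Adj]

theorem degree_add_degree_le_card_edgeFinset_add_one [DecidableEq V] {u v : V} (huv : G.Adj u v) :
    G.degree u + G.degree v ≤ #G.edgeFinset + 1 := by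
  have hinter : G.incidenceFinset u ∩ G.incidenceFinset v = {s(u, v)} := by
    simp only [incidenceFinset, ← Set.toFinset_inter, G.incidenceSet_inter_incidenceSet_of_adj huv,
      Set.toFinset_singleton]
  have hunion : #(G.incidenceFinset u ∪ G.incidenceFinset v) ≤ #G.edgeFinset :=
    card_le_card (union_subset (G.incidenceFinset_subset u) (G.incidenceFinset_subset v))
  rw [← card_incidenceFinset_eq_degree, ← card_incidenceFinset_eq_degree,
    ← card_union_add_card_inter, hinter, card_singleton]
  omega

theorem sum_sum_neighborFinset {M : Type*} [AddCommMonoid M] (f : V → M) :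
    ∑ u, ∑ v ∈ G.neighborFinset u, f v = ∑ v, G.degree v • f v := by
  rw [sum_comm' (t' := univ) (s' := fun v => G.neighborFinset v) (fun u v => by simp [adj_comm])]
  simp [card_neighborFinset_eq_degree]

theorem sum_degree_sq_le_card_edgeFinset_mul_add_one [DecidableEq V] :
    ∑ v, G.degree v ^ 2 ≤ #G.edgeFinset * (#G.edgeFinset + 1) := by
  have hpair : ∑ u, ∑ v ∈ G.neighborFinset u, (G.degree u + G.degree v)
      = 2 * ∑ v, G.degree v ^ 2 := by
    simp only [sum_add_distrib, sum_const, card_neighborFinset_eq_degree, sum_sum_neighborFinset,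
      smul_eq_mul, ← sq, two_mul]
  have hbound : ∑ u, ∑ v ∈ G.neighborFinset u, (G.degree u + G.degree v)
      ≤ 2 * (#G.edgeFinset * (#G.edgeFinset + 1)) := by
    calc _ ≤ ∑ u, ∑ v ∈ G.neighborFinset u, (#G.edgeFinset + 1) :=
          sum_le_sum fun u _ => sum_le_sum fun v hv =>
            G.degree_add_degree_le_card_edgeFinset_add_one ((G.mem_neighborFinset u v).1 hv)
      _ = 2 * (#G.edgeFinset * (#G.edgeFinset + 1)) := by
          simp only [sum_const, card_neighborFinset_eq_degree, smul_eq_mul, ← sum_mul,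
            sum_degrees_eq_twice_card_edges, mul_assoc]
  omega

def DeCaenBound : Prop :=
  ((Fintype.card V : ℝ) - 1) * ∑ v, (G.degree v : ℝ) ^ 2 ≤
    2 * (#G.edgeFinset : ℝ) ^ 2 +
      #G.edgeFinset * ((Fintype.card V : ℝ) - 1) * ((Fintype.card V : ℝ) - 2)

theorem deCaenBound_of_card_edgeFinset_le [DecidableEq V] (hn : 2 ≤ Fintype.card V)
    (hm : #G.edgeFinset + 1 ≤ Fintype.card V) : G.DeCaenBound := by
  set n := Fintype.card V
  set m := #G.edgeFinset
  have hsq : (∑ v, (G.degree v : ℝ) ^ 2) ≤ m * (m + 1) := by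
    exact_mod_cast G.sum_degree_sq_le_card_edgeFinset_mul_add_one
  have hroom : ((n : ℝ) - 1) * (m * (m + 1)) ≤ 2 * (m : ℝ) ^ 2 + m * (n - 1) * (n - 2) := by
    rcases (show n = 2 ∨ 3 ≤ n by omega) with h2 | h3
    · obtain h | h : m = 0 ∨ m = 1 := by omega
      all_goals norm_num [h, h2]
    · have hm' : (m : ℝ) + 1 ≤ n := by exact_mod_cast hm
      have h3' : (3 : ℝ) ≤ n := by exact_mod_cast h3
      nlinarith [mul_nonneg (mul_nonneg (sub_nonneg.2 h3') m.cast_nonneg) (sub_nonneg.2 hm')]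
  have hn' : (1 : ℝ) ≤ n := by exact_mod_cast (by omega : 1 ≤ n)
  exact (mul_le_mul_of_nonneg_left hsq (sub_nonneg.2 hn')).trans hroom

theorem cast_degree_compl [DecidableEq V] (v : V) :
    (Gᶜ.degree v : ℝ) = Fintype.card V - 1 - G.degree v := by
  have := G.degree_lt_card_verts v
  rw [degree_compl, Nat.cast_sub (by omega), Nat.cast_sub (by omega), Nat.cast_one]

theorem card_edgeFinset_compl_add [DecidableEq V] :
    2 * (#Gᶜ.edgeFinset + #G.edgeFinset) + Fintype.card V = Fintype.card V ^ 2 := by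
  have hdeg (v : V) : Gᶜ.degree v + G.degree v + 1 = Fintype.card V := by
    have := G.degree_lt_card_verts v
    rw [degree_compl]
    omega
  have hsum := sum_congr rfl fun v (_ : v ∈ univ) => hdeg v
  simp only [sum_add_distrib, sum_degrees_eq_twice_card_edges, sum_const, card_univ,
    smul_eq_mul, mul_one] at hsum
  linarith

theorem cast_card_edgeFinset_compl [DecidableEq V] :
    (#Gᶜ.edgeFinset : ℝ) = Fintype.card V * (Fintype.card V - 1) / 2 - #G.edgeFinset := by
  have h : (2 * (#Gᶜ.edgeFinset + #G.edgeFinset) + Fintype.card V : ℝ) = Fintype.card V ^ 2 := by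
    exact_mod_cast G.card_edgeFinset_compl_add
  linarith

theorem deCaenBound_of_compl [DecidableEq V] (h : Gᶜ.DeCaenBound) : G.DeCaenBound := by
  have hsq : ∑ v, (Gᶜ.degree v : ℝ) ^ 2 = Fintype.card V * ((Fintype.card V : ℝ) - 1) ^ 2
      - 2 * ((Fintype.card V : ℝ) - 1) * ∑ v, (G.degree v : ℝ) + ∑ v, (G.degree v : ℝ) ^ 2 := by
    simp only [cast_degree_compl, sub_sq', sum_add_distrib, sum_sub_distrib, sum_const, card_univ,
      nsmul_eq_mul, ← mul_sum]
    ring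
  have hG : ∑ v, (G.degree v : ℝ) = 2 * #G.edgeFinset := by
    exact_mod_cast G.sum_degrees_eq_twice_card_edges
  unfold DeCaenBound at h ⊢
  rw [hsq, hG, cast_card_edgeFinset_compl] at h
  linear_combination h

theorem deCaenBound_of_card_le_four [DecidableEq V] (h2 : 2 ≤ Fintype.card V)
    (h4 : Fintype.card V ≤ 4) : G.DeCaenBound := by
  have hsum := G.card_edgeFinset_compl_add
  by_cases hm : #G.edgeFinset + 1 ≤ Fintype.card V
  · exact G.deCaenBound_of_card_edgeFinset_le h2 hm
  · refine deCaenBound_of_compl G (Gᶜ.deCaenBound_of_card_edgeFinset_le h2 ?_)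
    interval_cases h : Fintype.card V <;> omega

theorem degree_induce_compl_singleton_add [DecidableEq V] (z : V) (v : ↥({z}ᶜ : Set V)) :
    (G.induce {z}ᶜ).degree v + (if G.Adj z v then 1 else 0) = G.degree v := by
  have hmap : ((G.induce {z}ᶜ).neighborFinset v).map (Function.Embedding.subtype _) =
      (G.neighborFinset v).erase z := by
    ext w
    simp [and_comm]
  rw [← card_neighborFinset_eq_degree, ← card_neighborFinset_eq_degree, ← card_map, hmap]
  split_ifs with hzv
  · exact card_erase_add_one ((G.mem_neighborFinset v z).2 hzv.symm)
  · rw [erase_eq_of_notMem (by simpa [adj_comm] using hzv), add_zero]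

theorem card_edgeFinset_induce_compl_singleton_add [DecidableEq V] (z : V) :
    #(G.induce {z}ᶜ).edgeFinset + G.degree z = #G.edgeFinset := by
  have := G.degree_le_card_edgeFinset z
  rw [card_edgeFinset_induce_compl_singleton, card_edgeFinset_deleteIncidenceSet]
  omega

theorem sum_sq_degree_induce_compl_singleton_add [DecidableEq V] (z : V) :
    ∑ v : ↥({z}ᶜ : Set V), (G.induce {z}ᶜ).degree v ^ 2 + 2 * ∑ v ∈ G.neighborFinset z, G.degree v
      + G.degree z ^ 2 = ∑ v, G.degree v ^ 2 + G.degree z := by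
  set a : V → ℕ := fun v => if G.Adj z v then 1 else 0
  have hpoint (v : ↥({z}ᶜ : Set V)) : (G.induce {z}ᶜ).degree v ^ 2 + 2 * (a v * G.degree v) =
      G.degree v ^ 2 + a v := by
    rw [← G.degree_induce_compl_singleton_add z v]
    by_cases hzv : G.Adj z v
    · simp [a, hzv]
      ring
    · simp [a, hzv]
  have hsum := sum_congr rfl fun v (_ : v ∈ univ) => hpoint v
  rw [sum_add_distrib, sum_add_distrib, ← mul_sum] at hsum
  have haz : a z = 0 := by simp [a]
  have hsq := Fintype.sum_compl_singleton_add z fun v => G.degree v ^ 2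
  have hadj := Fintype.sum_compl_singleton_add z a
  have hnbr := Fintype.sum_compl_singleton_add z fun v => a v * G.degree v
  rw [haz, add_zero] at hadj
  rw [haz, zero_mul, add_zero] at hnbr
  have hadj' : ∑ v, a v = G.degree z := by
    simp [a, ← card_neighborFinset_eq_degree, neighborFinset_eq_filter]
  have hnbr' : ∑ v, a v * G.degree v = ∑ v ∈ G.neighborFinset z, G.degree v := by
    simp [a, neighborFinset_eq_filter, sum_filter]
  omega

theorem sum_sum_sq_degree_induce_compl_singleton [DecidableEq V] :
    ∑ z, ∑ v : ↥({z}ᶜ : Set V), ((G.induce {z}ᶜ).degree v : ℝ) ^ 2 =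
      (Fintype.card V - 3) * ∑ v, (G.degree v : ℝ) ^ 2 + 2 * #G.edgeFinset := by
  have hz (z : V) : ∑ v : ↥({z}ᶜ : Set V), ((G.induce {z}ᶜ).degree v : ℝ) ^ 2 =
      ∑ v, (G.degree v : ℝ) ^ 2 + G.degree z - G.degree z ^ 2
        - 2 * ∑ v ∈ G.neighborFinset z, (G.degree v : ℝ) := by
    have := G.sum_sq_degree_induce_compl_singleton_add z
    rify at this
    linarith
  have hnbr : ∑ z, ∑ v ∈ G.neighborFinset z, (G.degree v : ℝ) = ∑ v, (G.degree v : ℝ) ^ 2 := by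
    simp only [sum_sum_neighborFinset, nsmul_eq_mul, sq]
  have hdeg : ∑ v, (G.degree v : ℝ) = 2 * #G.edgeFinset := by
    exact_mod_cast G.sum_degrees_eq_twice_card_edges
  simp only [hz, sum_sub_distrib, sum_add_distrib, ← mul_sum, hnbr, hdeg, sum_const, card_univ,
    nsmul_eq_mul]
  ring

theorem sum_card_edgeFinset_induce_compl_singleton [DecidableEq V] :
    ∑ z, (#(G.induce {z}ᶜ).edgeFinset : ℝ) = (Fintype.card V - 2) * #G.edgeFinset := by
  have hz (z : V) : (#(G.induce {z}ᶜ).edgeFinset : ℝ) = #G.edgeFinset - G.degree z := by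
    have := G.card_edgeFinset_induce_compl_singleton_add z
    rify at this
    linarith
  have hdeg : ∑ v, (G.degree v : ℝ) = 2 * #G.edgeFinset := by
    exact_mod_cast G.sum_degrees_eq_twice_card_edges
  simp only [hz, sum_sub_distrib, hdeg, sum_const, card_univ, nsmul_eq_mul]
  ring

theorem sum_sq_card_edgeFinset_induce_compl_singleton [DecidableEq V] :
    ∑ z, (#(G.induce {z}ᶜ).edgeFinset : ℝ) ^ 2 =
      (Fintype.card V - 4) * (#G.edgeFinset : ℝ) ^ 2 + ∑ v, (G.degree v : ℝ) ^ 2 := by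
  have hz (z : V) : (#(G.induce {z}ᶜ).edgeFinset : ℝ) ^ 2 =
      (#G.edgeFinset : ℝ) ^ 2 - 2 * #G.edgeFinset * G.degree z + (G.degree z : ℝ) ^ 2 := by
    have := G.card_edgeFinset_induce_compl_singleton_add z
    rify at this
    rw [← sub_sq, ← this, add_sub_cancel_right]
  have hdeg : ∑ v, (G.degree v : ℝ) = 2 * #G.edgeFinset := by
    exact_mod_cast G.sum_degrees_eq_twice_card_edges
  simp only [hz, sum_add_distrib, sum_sub_distrib, ← mul_sum, hdeg, sum_const, card_univ,
    nsmul_eq_mul]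
  ring

theorem deCaenBound_of_forall_induce_compl_singleton [DecidableEq V] (hn : 5 ≤ Fintype.card V)
    (h : ∀ z, (G.induce {z}ᶜ).DeCaenBound) : G.DeCaenBound := by
  have hcard (z : V) : (Fintype.card ↥({z}ᶜ : Set V) : ℝ) = Fintype.card V - 1 := by
    have := Fintype.card_compl_singleton_add_one z
    rify at this
    linarith
  have hsum := sum_le_sum fun z (_ : z ∈ univ) => h z
  simp only [hcard, ← mul_sum, sum_add_distrib, ← sum_mul,
    sum_sum_sq_degree_induce_compl_singleton, sum_card_edgeFinset_induce_compl_singleton,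
    sum_sq_card_edgeFinset_induce_compl_singleton] at hsum
  have hn' : (5 : ℝ) ≤ Fintype.card V := by exact_mod_cast hn
  unfold DeCaenBound
  refine le_of_mul_le_mul_left ?_ (by linarith : (0 : ℝ) < Fintype.card V - 4)
  linear_combination hsum

theorem deCaenBound [DecidableEq V] (hn : 2 ≤ Fintype.card V) : G.DeCaenBound := by
  induction hc : Fintype.card V using Nat.strong_induction_on generalizing V with
  | _ n ih =>
    by_cases h4 : n ≤ 4
    · exact G.deCaenBound_of_card_le_four (hc ▸ hn) (hc ▸ h4)
    · refine G.deCaenBound_of_forall_induce_compl_singleton (by omega) fun z =>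
        ih (n - 1) (by omega) _ ?_ ?_ <;> have := Fintype.card_compl_singleton_add_one z <;> omega

end SimpleGraph

/-- de Caen's bound, used in the complexity analysis of DecGP: for a finite
simple graph with `n ≥ 2` vertices and `m` edges,
`∑_u deg(u)² ≤ m · (2m/(n-1) + n - 2)`. -/
theorem stmt_12 {V : Type*} [Fintype V] [DecidableEq V] (G : SimpleGraph V)
    [DecidableRel G.Adj] (hn : 2 ≤ Fintype.card V) :
    ∑ u : V, (G.degree u : ℝ) ^ 2
      ≤ (G.edgeFinset.card : ℝ) *
          (2 * (G.edgeFinset.card : ℝ) / ((Fintype.card V : ℝ) - 1)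
            + (Fintype.card V : ℝ) - 2) := by
  have hbound := G.deCaenBound hn
  have hn' : (0 : ℝ) < Fintype.card V - 1 := by
    have : (2 : ℝ) ≤ Fintype.card V := by exact_mod_cast hn
    linarith
  have hrhs : (G.edgeFinset.card : ℝ) * (2 * (G.edgeFinset.card : ℝ) / ((Fintype.card V : ℝ) - 1)
      + (Fintype.card V : ℝ) - 2) = (2 * (G.edgeFinset.card : ℝ) ^ 2 + G.edgeFinset.card *
        ((Fintype.card V : ℝ) - 1) * ((Fintype.card V : ℝ) - 2)) / ((Fintype.card V : ℝ) - 1) := by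
    field_simp
    ring
  rw [hrhs, le_div_iff₀ hn', mul_comm]
  exact hbound
end
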